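/- Let F := D_t + M_x ∘ D_y − D_x² be the Fokker–Planck operator on R = ℝ[t,x,y]. Then for all i, j, r ∈ ℕ: F( t^{r+1} · (P³)^i (P²)^j 1 ) = (r+1) · t^r · (P³)^i (P²)^j 1. Equivalently, u = (r+1)^{-1} t^{r+1} (P³)^i (P²)^j 1 is a particular solution of the inhomogeneous equation F u = t^r (P³)^i (P²)^j 1. -/

import Mathlib

open MvPolynomial

noncomputable section

abbrev R3 : Type := MvPolynomial (Fin 3) ℝ

def t : R3 := X 0
def x : R3 := X 1
def y : R3 := X 2

def Dt : Module.End ℝ R3 := (pderiv (0 : Fin 3)).toLinearMap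
def Dx : Module.End ℝ R3 := (pderiv (1 : Fin 3)).toLinearMap
def Dy : Module.End ℝ R3 := (pderiv (2 : Fin 3)).toLinearMap

/-- Multiplication by a polynomial, as a linear endomorphism. -/
def M (a : R3) : Module.End ℝ R3 := LinearMap.mulLeft ℝ a

def P3 : Module.End ℝ R3 := 3 • (M (t ^ 2) * Dx) + M (t ^ 3) * Dy - 3 • M (y - t * x)
def P2 : Module.End ℝ R3 := 2 • (M t * Dx) + M (t ^ 2) * Dy + M x

/-- The Fokker–Planck operator `F := D_t + M_x D_y − D_x²`. -/
def F : Module.End ℝ R3 := Dt + M x * Dy - Dx ^ 2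

/-! `P3` and `P2` are symmetry operators of `F`: they commute with it, so the polynomials
`(P3 ^ i * P2 ^ j) 1` lie in the kernel of `F`, which contains `1`. Since `D_x` and `D_y` kill `t`,
`F (t ^ (r + 1) * w) = (r + 1) t ^ r w + t ^ (r + 1) F w`, and the second term vanishes on that kernel. -/

theorem Derivation.map_ofNat {R A M : Type*} [CommSemiring R] [CommSemiring A] [Algebra R A]
    [AddCommMonoid M] [Module A M] [Module R M] (D : Derivation R A M) (n : ℕ) [n.AtLeastTwo] :
    D (no_index (OfNat.ofNat n : A)) = 0 :=
  D.map_natCast n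

theorem MvPolynomial.pderiv_pderiv_comm {σ R : Type*} [CommRing R] (i j : σ)
    (p : MvPolynomial σ R) : pderiv i (pderiv j p) = pderiv j (pderiv i p) := by
  classical
  have h : ⁅pderiv i, pderiv j⁆ = (0 : Derivation R (MvPolynomial σ R) (MvPolynomial σ R)) :=
    derivation_ext fun k => by
      rw [Derivation.commutator_apply, pderiv_X, pderiv_X, Pi.single_apply, Pi.single_apply]
      split_ifs <;> simp
  rw [← sub_eq_zero, ← Derivation.commutator_apply, h, Derivation.zero_apply]

lemma F_apply (p : R3) : F p = pderiv 0 p + X 1 * pderiv 2 p - pderiv 1 (pderiv 1 p) := by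
  simp [F, Dt, Dx, Dy, M, x, sq]

lemma P2_apply (p : R3) : P2 p = 2 * (X 0 * pderiv 1 p) + X 0 ^ 2 * pderiv 2 p + X 1 * p := by
  simp [P2, Dx, Dy, M, t, x]

lemma P3_apply (p : R3) :
    P3 p = 3 * (X 0 ^ 2 * pderiv 1 p) + X 0 ^ 3 * pderiv 2 p - 3 * ((X 2 - X 0 * X 1) * p) := by
  simp [P3, Dx, Dy, M, t, x, y]

lemma commute_F_P2 : Commute F P2 := by
  refine LinearMap.ext fun p => ?_
  simp only [Module.End.mul_apply, F_apply, P2_apply, map_add, map_sub, pderiv_mul, pderiv_pow,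
    pderiv_X, Pi.single_apply, Derivation.map_ofNat, Fin.reduceEq, ite_true, ite_false,
    pderiv_one, map_zero, pderiv_pderiv_comm]
  ring

lemma commute_F_P3 : Commute F P3 := by
  refine LinearMap.ext fun p => ?_
  simp only [Module.End.mul_apply, F_apply, P3_apply, map_add, map_sub, pderiv_mul, pderiv_pow,
    pderiv_X, Pi.single_apply, Derivation.map_ofNat, Fin.reduceEq, ite_true, ite_false,
    pderiv_one, map_zero, pderiv_pderiv_comm]
  ring

lemma F_one : F 1 = 0 := by
  simp [F_apply]

lemma F_P3_pow_mul_P2_pow_apply_one (i j : ℕ) : F ((P3 ^ i * P2 ^ j) 1) = 0 := by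
  rw [← Module.End.mul_apply, ((commute_F_P3.pow_right i).mul_right (commute_F_P2.pow_right j)).eq,
    Module.End.mul_apply, F_one, map_zero]

lemma F_t_pow_succ_mul (n : ℕ) (p : R3) :
    F (t ^ (n + 1) * p) = ((n : ℝ) + 1) • (t ^ n * p) + t ^ (n + 1) * F p := by
  simp only [F_apply, t, pderiv_mul, pderiv_pow, pderiv_X, Pi.single_apply, Fin.reduceEq,
    ite_true, ite_false, map_zero, smul_eq_C_mul, map_add, map_natCast, map_one,
    Nat.add_sub_cancel, Nat.cast_add, Nat.cast_one]
  ring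

/-- For all `i, j, r`,
`F(t^{r+1}·(P³)^i(P²)^j 1) = (r+1)·t^r·(P³)^i(P²)^j 1`; i.e.
`u = (r+1)⁻¹ t^{r+1} (P³)^i (P²)^j 1` is a particular solution of the inhomogeneous
equation `F u = t^r (P³)^i (P²)^j 1`. -/
theorem stmt9 (i j r : ℕ) :
    F (t ^ (r + 1) * (P3 ^ i * P2 ^ j) 1)
      = ((r : ℝ) + 1) • (t ^ r * (P3 ^ i * P2 ^ j) 1) := by
  rw [F_t_pow_succ_mul, F_P3_pow_mul_P2_pow_apply_one, mul_zero, add_zero]
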